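/- Let β < μ_1 and set α_k = (μ_k − β)^{−1/2} for k = 1, …, n. Then for all real numbers u_1, …, u_n the identity (∑_{k=1}^n 1/(μ_k − β))·(∑_{k=1}^n (μ_k − β)·α_k·u_k³) + (∑_{k=1}^n β/(μ_k − β))·(∑_{k=1}^n α_k·u_k)·(∑_{k=1}^n u_k²) = g(β)·(∑_{k=1}^n α_k·u_k³ + ∑_{1 ≤ i < j ≤ n} (α_i·u_i·u_j² + α_j·u_i²·u_j)) + ∑_{1 ≤ i < j ≤ n} (√(μ_j − β)·u_j + √(μ_i − β)·u_i)·(u_j/√(μ_i − β) − u_i/√(μ_j − β))² holds. Consequently, if u_k ≥ 0 for all k, then the left-hand side is ≥ g(β)·(∑_{k=1}^n α_k·u_k³ + ∑_{1 ≤ i < j ≤ n} (α_i·u_i·u_j² + α_j·u_i²·u_j)). -/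

import Mathlib

open Finset

/-!
Write `s k = √(μ k - β)`. Since `g β = 1 + β ∑ 1 / s k ^ 2` and `(∑ α k u k)(∑ u k ^ 2)` expands to
the factor multiplying `g β`, the identity reduces to a Lagrange-type identity
`(∑ 1 / s k ^ 2)(∑ s k u k ^ 3) - (∑ u k / s k)(∑ u k ^ 2) = ∑_{i<j} (s j u j + s i u i)(u j / s i - u i / s j) ^ 2`:
expanding both products as double sums, the diagonal terms cancel and each pair `(i, j)`, `(j, i)`
of off-diagonal terms contributes one summand on the right.
-/

theorem Finset.sum_sum_eq_sum_diag_add_sum_lt {ι M : Type*} [Fintype ι] [LinearOrder ι]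
    [AddCommMonoid M] (f : ι → ι → M) :
    ∑ i, ∑ j, f i j
      = ∑ i, f i i + ∑ i, ∑ j ∈ univ.filter (fun j => i < j), (f i j + f j i) := by
  have split : ∀ i, ∑ j, f i j
      = f i i + ∑ j ∈ univ.filter (fun j => i < j), f i j
          + ∑ j ∈ univ.filter (fun j => j < i), f i j := by
    intro i
    have not_gt : univ.filter (fun j => ¬ i < j) = insert i (univ.filter (fun j => j < i)) := by
      ext j
      simp [le_iff_lt_or_eq, or_comm]
    rw [← sum_filter_add_sum_filter_not univ (fun j => i < j), not_gt, sum_insert (by simp)]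
    abel
  have swap : ∑ i, ∑ j ∈ univ.filter (fun j => j < i), f i j
      = ∑ i, ∑ j ∈ univ.filter (fun j => i < j), f j i :=
    sum_comm' (by simp)
  simp only [split, sum_add_distrib, swap]
  abel

theorem Finset.sum_mul_sum_eq_sum_diag_add_sum_lt {ι R : Type*} [Fintype ι] [LinearOrder ι]
    [CommSemiring R] (a b : ι → R) :
    (∑ i, a i) * ∑ j, b j
      = ∑ i, a i * b i + ∑ i, ∑ j ∈ univ.filter (fun j => i < j), (a i * b j + a j * b i) := by
  rw [sum_mul_sum, sum_sum_eq_sum_diag_add_sum_lt]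

theorem cube_pair_identity {a b x y : ℝ} (ha : 0 < a) (hb : 0 < b) :
    1 / a * (b * (√b)⁻¹ * y ^ 3) + 1 / b * (a * (√a)⁻¹ * x ^ 3)
        - ((√a)⁻¹ * x * y ^ 2 + (√b)⁻¹ * y * x ^ 2)
      = (√b * y + √a * x) * (y / √a - x / √b) ^ 2 := by
  obtain ⟨s, hs, rfl⟩ : ∃ s, 0 < s ∧ a = s ^ 2 :=
    ⟨√a, Real.sqrt_pos.2 ha, (Real.sq_sqrt ha.le).symm⟩
  obtain ⟨t, ht, rfl⟩ : ∃ t, 0 < t ∧ b = t ^ 2 :=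
    ⟨√b, Real.sqrt_pos.2 hb, (Real.sq_sqrt hb.le).symm⟩
  rw [Real.sqrt_sq hs.le, Real.sqrt_sq ht.le]
  field_simp
  ring

theorem sum_inv_mul_sum_mul_cube_eq {ι : Type*} [Fintype ι] [LinearOrder ι] (d u : ι → ℝ)
    (hd : ∀ k, 0 < d k) :
    (∑ k, 1 / d k) * ∑ k, d k * (√(d k))⁻¹ * u k ^ 3
      = (∑ k, (√(d k))⁻¹ * u k) * ∑ k, u k ^ 2
        + ∑ i, ∑ j ∈ univ.filter (fun j => i < j),
            (√(d j) * u j + √(d i) * u i) * (u j / √(d i) - u i / √(d j)) ^ 2 := by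
  rw [← sub_eq_iff_eq_add', sum_mul_sum, sum_mul_sum, ← sum_sub_distrib]
  simp only [← sum_sub_distrib]
  rw [sum_sum_eq_sum_diag_add_sum_lt]
  have diag : ∀ i, 1 / d i * (d i * (√(d i))⁻¹ * u i ^ 3) - (√(d i))⁻¹ * u i * u i ^ 2 = 0 := by
    intro i
    field_simp [(hd i).ne']
    ring
  simp only [diag, sum_const_zero, zero_add]
  refine sum_congr rfl fun i _ => sum_congr rfl fun j _ => ?_
  rw [← cube_pair_identity (hd i) (hd j)]
  ring

/-- The algebraic identity underlying the nonexistence proof: for `β < μ₁`,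
`αₖ = (μₖ - β)^{-1/2}` and arbitrary reals `u₁, …, uₙ`, the quantity
`(∑ₖ 1/(μₖ-β))·(∑ₖ (μₖ-β)αₖuₖ³) + (∑ₖ β/(μₖ-β))·(∑ₖ αₖuₖ)·(∑ₖ uₖ²)` equals
`g(β)·(∑ₖ αₖuₖ³ + ∑_{i<j} (αᵢuᵢuⱼ² + αⱼuᵢ²uⱼ))` plus a sum of nonnegative terms
(when the `uₖ` are nonnegative), giving the stated lower bound. -/
theorem nonexistence_identity (n : ℕ) (hn : 2 ≤ n) (μ : Fin n → ℝ) (hμ : Monotone μ)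
    (g : ℝ → ℝ)
    (hg : ∀ β : ℝ, (∀ j, β ≠ μ j) → g β = 1 + β * ∑ j, 1 / (μ j - β))
    (β : ℝ) (hβ : β < μ ⟨0, by omega⟩)
    (α : Fin n → ℝ) (hα : ∀ k, α k = (Real.sqrt (μ k - β))⁻¹) :
    ∀ u : Fin n → ℝ,
      ((∑ k, 1 / (μ k - β)) * (∑ k, (μ k - β) * α k * u k ^ 3)
        + (∑ k, β / (μ k - β)) * (∑ k, α k * u k) * (∑ k, u k ^ 2)
      = g β * ((∑ k, α k * u k ^ 3)
          + ∑ i, ∑ j ∈ Finset.univ.filter (fun j => i < j),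
              (α i * u i * u j ^ 2 + α j * u i ^ 2 * u j))
        + ∑ i, ∑ j ∈ Finset.univ.filter (fun j => i < j),
            (Real.sqrt (μ j - β) * u j + Real.sqrt (μ i - β) * u i)
              * (u j / Real.sqrt (μ i - β) - u i / Real.sqrt (μ j - β)) ^ 2) ∧
      ((∀ k, 0 ≤ u k) →
        g β * ((∑ k, α k * u k ^ 3)
          + ∑ i, ∑ j ∈ Finset.univ.filter (fun j => i < j),
              (α i * u i * u j ^ 2 + α j * u i ^ 2 * u j))
        ≤ (∑ k, 1 / (μ k - β)) * (∑ k, (μ k - β) * α k * u k ^ 3)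
          + (∑ k, β / (μ k - β)) * (∑ k, α k * u k) * (∑ k, u k ^ 2)) := by
  intro u
  have hd : ∀ k, 0 < μ k - β := fun k => sub_pos.2 (hβ.trans_le (hμ (Fin.le_def.2 (Nat.zero_le _))))
  have hgβ := hg β fun j => (sub_pos.1 (hd j)).ne
  have hβsum : ∑ k, β / (μ k - β) = β * ∑ k, 1 / (μ k - β) := by
    simp only [mul_sum, mul_one_div]
  have hexpand : (∑ k, α k * u k) * ∑ k, u k ^ 2
      = ∑ k, α k * u k ^ 3 + ∑ i, ∑ j ∈ univ.filter (fun j => i < j),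
          (α i * u i * u j ^ 2 + α j * u i ^ 2 * u j) := by
    rw [sum_mul_sum_eq_sum_diag_add_sum_lt]
    congr 1 <;> refine sum_congr rfl fun i _ => ?_
    · ring
    · exact sum_congr rfl fun j _ => by ring
  have hcore := sum_inv_mul_sum_mul_cube_eq (fun k => μ k - β) u hd
  simp only [← hα] at hcore
  have hpairs_nonneg : (∀ k, 0 ≤ u k) → 0 ≤ ∑ i, ∑ j ∈ univ.filter (fun j => i < j),
      (√(μ j - β) * u j + √(μ i - β) * u i) * (u j / √(μ i - β) - u i / √(μ j - β)) ^ 2 :=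
    fun hu => sum_nonneg fun i _ => sum_nonneg fun j _ =>
      mul_nonneg (add_nonneg (mul_nonneg (Real.sqrt_nonneg _) (hu j))
        (mul_nonneg (Real.sqrt_nonneg _) (hu i))) (sq_nonneg _)
  rw [hgβ, hβsum, ← hexpand]
  exact ⟨by linear_combination hcore, fun hu => by linarith [hpairs_nonneg hu]⟩
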